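/- arXiv:2405.03364 — 8 statements merged into one kernel-verified Lean document; each statement's English description precedes it below -/
import Mathlib

section
/- Let M = C^{d×d} with delta-form δ(x) = d·tr(xσ) for σ positive invertible with tr(σ^{-1}) = d. Let L²(M) be M with inner product ⟨x,y⟩ = δ(y*x) and L²(M⊗M) = M⊗M with the tensor inner product. Then the multiplication map m: L²(M⊗M) → L²(M), m(x⊗y) = xy, satisfies m ∘ m* = id. -/
/-!
Any two adjoints `s`, `t` of `m` agree after applying `m`: for every `y`,
`⟨y, m (s x)⟩ = ⟨s y, s x⟩ = conj ⟨s x, s y⟩ = conj ⟨t x, s y⟩ = ⟨s y, t x⟩ = ⟨y, m (t x)⟩`,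
using only conjugate symmetry of the tensor inner product (inherited from that of `δ`) and
nondegeneracy of `⟨·, ·⟩` on `L²(M)`. So it suffices to exhibit one adjoint, and
`m*(x) = d⁻¹ ∑ᵢⱼ x σ Eⱼᵢ σ⁻¹ ⊗ Eᵢⱼ σ⁻¹` works; multiplying out,
`m (m* x) = d⁻¹ tr(σ⁻¹) x = x`.
-/

open scoped ComplexOrder TensorProduct
open Matrix

theorem apply_adjoint_eq_of_adjoint {R E F : Type*} [Star R]
    {ipE : E → E → R} {ipF : F → F → R}
    (hE : ∀ {a b}, (∀ y, ipE y a = ipE y b) → a = b) (hF : ∀ u v, star (ipF u v) = ipF v u)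
    {m : F → E} {s t : E → F}
    (hs : ∀ x ξ, ipF (s x) ξ = ipE x (m ξ)) (ht : ∀ x ξ, ipF (t x) ξ = ipE x (m ξ)) (x : E) :
    m (s x) = m (t x) :=
  hE fun y => calc
    ipE y (m (s x)) = ipF (s y) (s x) := (hs y _).symm
    _ = star (ipF (s x) (s y)) := (hF _ _).symm
    _ = star (ipF (t x) (s y)) := by rw [hs, ht]
    _ = ipF (s y) (t x) := hF _ _
    _ = ipE y (m (t x)) := hs y _

section TensorInner

variable {R E : Type*} [CommRing R] [StarRing R] [AddCommMonoid E] [Module R E]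
  {ip : E → E → R} {ip2 : E ⊗[R] E → E ⊗[R] E → R}

theorem star_tensorInner_of_tmul (hip : ∀ a b, star (ip a b) = ip b a)
    (h₁ : ∀ u v w, ip2 (u + v) w = ip2 u w + ip2 v w)
    (h₂ : ∀ u v w, ip2 u (v + w) = ip2 u v + ip2 u w)
    (ht : ∀ x y z t, ip2 (x ⊗ₜ y) (z ⊗ₜ t) = ip x z * ip y t) (u v : E ⊗[R] E) :
    star (ip2 u v) = ip2 v u := by
  have h0₁ : ∀ w, ip2 0 w = 0 := fun w => (AddMonoidHom.mk' (ip2 · w) (h₁ · · w)).map_zero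
  have h0₂ : ∀ w, ip2 w 0 = 0 := fun w => (AddMonoidHom.mk' (ip2 w) (h₂ w)).map_zero
  induction u using TensorProduct.induction_on generalizing v with
  | zero => rw [h0₁, h0₂, star_zero]
  | tmul a b =>
    induction v using TensorProduct.induction_on with
    | zero => rw [h0₁, h0₂, star_zero]
    | tmul c e => rw [ht, ht, star_mul', hip, hip]
    | add v w ihv ihw => rw [h₂, h₁, star_add, ihv, ihw]
  | add u w ihu ihw => rw [h₁, h₂, star_add, ihu, ihw]

end TensorInner

section GNS

variable {n : Type*} [Fintype n]

/-- GNS inner product of the functional `x ↦ c · tr (x σ)`. -/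
def gnsInner (c : ℝ) (σ x y : Matrix n n ℂ) : ℂ := c * (star y * x * σ).trace

theorem star_gnsInner {c : ℝ} {σ : Matrix n n ℂ} (hσ : σ.IsHermitian) (x y : Matrix n n ℂ) :
    star (gnsInner c σ x y) = gnsInner c σ y x := by
  rw [gnsInner, gnsInner, star_mul', ← trace_conjTranspose, Complex.star_def, Complex.conj_ofReal]
  simp only [star_eq_conjTranspose, conjTranspose_mul, conjTranspose_conjTranspose, hσ.eq]
  rw [trace_mul_cycle, Matrix.mul_assoc]

theorem gnsInner_add_right (c : ℝ) (σ x y z : Matrix n n ℂ) :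
    gnsInner c σ x (y + z) = gnsInner c σ x y + gnsInner c σ x z := by
  simp only [gnsInner, star_add, Matrix.add_mul, trace_add, mul_add]

variable [DecidableEq n]

theorem eq_of_gnsInner_eq {c : ℝ} (hc : c ≠ 0) {σ : Matrix n n ℂ} (hσ : IsUnit σ.det)
    {a b : Matrix n n ℂ} (h : ∀ y, gnsInner c σ y a = gnsInner c σ y b) : a = b := by
  have hσa : σ * star a = σ * star b := ext_iff_trace_mul_right.mpr fun y => by
    have := h y
    rwa [gnsInner, gnsInner, mul_right_inj' (Complex.ofReal_ne_zero.mpr hc), trace_mul_cycle,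
      trace_mul_cycle (star b)] at this
  exact star_injective (((isUnit_iff_isUnit_det σ).mpr hσ).mul_left_cancel hσa)

/-- `m*(x) = (x ⊗ 1) · m*(1)`, since `m*` is a left `M`-module map. -/
noncomputable def gnsMulAdjoint (c : ℝ) (σ x : Matrix n n ℂ) : Matrix n n ℂ ⊗[ℂ] Matrix n n ℂ :=
  ∑ i, ∑ j, ((c : ℂ)⁻¹ • (x * σ * single j i 1 * σ⁻¹)) ⊗ₜ (single i j 1 * σ⁻¹)

variable {c : ℝ} {σ : Matrix n n ℂ}
  {ip2 : Matrix n n ℂ ⊗[ℂ] Matrix n n ℂ → Matrix n n ℂ ⊗[ℂ] Matrix n n ℂ → ℂ}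

theorem tensorInner_gnsMulAdjoint_tmul (hc : c ≠ 0) (hσ : IsUnit σ.det)
    (h₁ : ∀ u v w, ip2 (u + v) w = ip2 u w + ip2 v w)
    (ht : ∀ x y z t, ip2 (x ⊗ₜ y) (z ⊗ₜ t) = gnsInner c σ x z * gnsInner c σ y t)
    (x z t : Matrix n n ℂ) :
    ip2 (gnsMulAdjoint c σ x) (z ⊗ₜ t) = gnsInner c σ x (z * t) := by
  have hsum : ∀ (f : n → _) w, ip2 (∑ i, f i) w = ∑ i, ip2 (f i) w := fun f w =>
    map_sum (AddMonoidHom.mk' (ip2 · w) (h₁ · · w)) f _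
  have hleft : ∀ i j, gnsInner c σ ((c : ℂ)⁻¹ • (x * σ * single j i 1 * σ⁻¹)) z =
      (star z * x * σ) i j := fun i j => by
    rw [gnsInner, Matrix.mul_smul, Matrix.smul_mul, trace_smul, smul_eq_mul, ← mul_assoc,
      mul_inv_cancel₀ (Complex.ofReal_ne_zero.mpr hc), one_mul]
    simp only [Matrix.mul_assoc, nonsing_inv_mul σ hσ, Matrix.mul_one]
    simp [← Matrix.mul_assoc, trace_mul_single]
  have hright : ∀ i j, gnsInner c σ (single i j 1 * σ⁻¹) t = c * star t j i := fun i j => by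
    rw [gnsInner, Matrix.mul_assoc (star t), Matrix.mul_assoc, nonsing_inv_mul σ hσ,
      Matrix.mul_one]
    simp [trace_mul_single]
  calc ip2 (gnsMulAdjoint c σ x) (z ⊗ₜ t)
      = ∑ i, ∑ j, (star z * x * σ) i j * (c * star t j i) := by
        simp only [gnsMulAdjoint, hsum, ht, hleft, hright]
    _ = c * (star z * x * σ * star t).trace := by
        generalize star z * x * σ = A
        simp only [trace, diag, mul_apply, Finset.mul_sum, mul_left_comm]
    _ = gnsInner c σ x (z * t) := by
        rw [gnsInner, star_mul, trace_mul_comm]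
        simp only [Matrix.mul_assoc]

theorem tensorInner_gnsMulAdjoint (hc : c ≠ 0) (hσ : IsUnit σ.det)
    (h₁ : ∀ u v w, ip2 (u + v) w = ip2 u w + ip2 v w)
    (h₂ : ∀ u v w, ip2 u (v + w) = ip2 u v + ip2 u w)
    (ht : ∀ x y z t, ip2 (x ⊗ₜ y) (z ⊗ₜ t) = gnsInner c σ x z * gnsInner c σ y t)
    (x : Matrix n n ℂ) (ξ : Matrix n n ℂ ⊗[ℂ] Matrix n n ℂ) :
    ip2 (gnsMulAdjoint c σ x) ξ = gnsInner c σ x (LinearMap.mul' ℂ _ ξ) := by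
  induction ξ using TensorProduct.induction_on with
  | zero =>
    rw [map_zero]
    exact (AddMonoidHom.mk' (ip2 _) (h₂ _)).map_zero.trans (by simp [gnsInner])
  | tmul z t => rw [LinearMap.mul'_apply, tensorInner_gnsMulAdjoint_tmul hc hσ h₁ ht]
  | add u v hu hv => rw [h₂, map_add, gnsInner_add_right, hu, hv]

theorem mul'_gnsMulAdjoint (hc : c ≠ 0) (hσ : IsUnit σ.det) (htr : σ⁻¹.trace = c)
    (x : Matrix n n ℂ) :
    LinearMap.mul' ℂ _ (gnsMulAdjoint c σ x) = x := by
  have hterm : ∀ i j, LinearMap.mul' ℂ _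
      (((c : ℂ)⁻¹ • (x * σ * single j i 1 * σ⁻¹)) ⊗ₜ[ℂ] (single i j 1 * σ⁻¹)) =
      ((c : ℂ)⁻¹ * σ⁻¹ i i) • (x * σ * single j j 1 * σ⁻¹) := fun i j => by
    have hmid : single j i 1 * σ⁻¹ * single i j 1 = σ⁻¹ i i • single j j (1 : ℂ) := by
      rw [single_mul_mul_single, smul_single, one_mul, mul_one, smul_eq_mul, mul_one]
    rw [LinearMap.mul'_apply, Matrix.smul_mul, mul_smul]
    congr 1
    calc x * σ * single j i 1 * σ⁻¹ * (single i j 1 * σ⁻¹)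
        = x * σ * (single j i 1 * σ⁻¹ * single i j 1) * σ⁻¹ := by simp only [Matrix.mul_assoc]
      _ = σ⁻¹ i i • (x * σ * single j j 1 * σ⁻¹) := by
        rw [hmid]
        simp only [Matrix.mul_smul, Matrix.smul_mul]
  calc LinearMap.mul' ℂ _ (gnsMulAdjoint c σ x)
      = ∑ i, ∑ j, ((c : ℂ)⁻¹ * σ⁻¹ i i) • (x * σ * single j j 1 * σ⁻¹) := by
        simp only [gnsMulAdjoint, map_sum, hterm]
    _ = ∑ i, ((c : ℂ)⁻¹ * σ⁻¹ i i) • x := by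
        simp only [← Finset.smul_sum, ← Matrix.sum_mul, ← Matrix.mul_sum, sum_single_one,
          Matrix.mul_one]
        simp only [Matrix.mul_assoc, mul_nonsing_inv σ hσ, Matrix.mul_one]
    _ = x := by
        rw [← Finset.sum_smul, ← Finset.mul_sum]
        change ((c : ℂ)⁻¹ * σ⁻¹.trace) • x = x
        rw [htr, inv_mul_cancel₀ (Complex.ofReal_ne_zero.mpr hc), one_smul]

end GNS

/-- For `M = ℂ^{d×d}` with delta-form `δ(x) = d·tr(xσ)` (with `σ` positive
invertible and `tr(σ⁻¹) = d`), the multiplication map `m : L²(M⊗M) → L²(M)` satisfies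
`m ∘ m* = id`, where `m*` is the adjoint for the GNS inner products. -/
theorem stmt1 (d : ℕ) (hd : 0 < d)
    (σ : Matrix (Fin d) (Fin d) ℂ) (hσ : σ.PosDef)
    (htr : (σ⁻¹).trace = (d : ℂ))
    -- the GNS inner product on L²(M), ⟨x,y⟩ = δ(y*x), linear in the first variable
    (ip : Matrix (Fin d) (Fin d) ℂ → Matrix (Fin d) (Fin d) ℂ → ℂ)
    (hip : ∀ x y, ip x y = (d : ℂ) * ((star y) * x * σ).trace)
    -- the tensor product inner product on L²(M ⊗ M)
    (ip2 : (Matrix (Fin d) (Fin d) ℂ ⊗[ℂ] Matrix (Fin d) (Fin d) ℂ) →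
      (Matrix (Fin d) (Fin d) ℂ ⊗[ℂ] Matrix (Fin d) (Fin d) ℂ) → ℂ)
    (hip2₁ : ∀ u v w, ip2 (u + v) w = ip2 u w + ip2 v w)
    (hip2₂ : ∀ u v w, ip2 u (v + w) = ip2 u v + ip2 u w)
    (hip2t : ∀ x y z t, ip2 (x ⊗ₜ[ℂ] y) (z ⊗ₜ[ℂ] t) = ip x z * ip y t)
    -- `m*`, the adjoint of the multiplication map `m = LinearMap.mul'`
    (mstar : Matrix (Fin d) (Fin d) ℂ →ₗ[ℂ]
      Matrix (Fin d) (Fin d) ℂ ⊗[ℂ] Matrix (Fin d) (Fin d) ℂ)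
    (hadj : ∀ x ξ, ip2 (mstar x) ξ =
      ip x (LinearMap.mul' ℂ (Matrix (Fin d) (Fin d) ℂ) ξ)) :
    ∀ x, LinearMap.mul' ℂ (Matrix (Fin d) (Fin d) ℂ) (mstar x) = x := by
  have hc : (d : ℝ) ≠ 0 := Nat.cast_ne_zero.mpr hd.ne'
  have hσdet : IsUnit σ.det := hσ.det_pos.ne'.isUnit
  obtain rfl : ip = gnsInner d σ := by
    funext x y
    rw [hip, gnsInner, Complex.ofReal_natCast]
  have htr' : σ⁻¹.trace = ((d : ℝ) : ℂ) := by rw [htr, Complex.ofReal_natCast]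
  intro x
  rw [apply_adjoint_eq_of_adjoint (eq_of_gnsInner_eq hc hσdet)
    (star_tensorInner_of_tmul (star_gnsInner hσ.isHermitian) hip2₁ hip2₂ hip2t) hadj
    (tensorInner_gnsMulAdjoint hc hσdet hip2₁ hip2₂ hip2t) x]
  exact mul'_gnsMulAdjoint hc hσdet htr' x
end

section
/- With M = C^{d×d}, delta-form δ(x) = d·tr(xσ), and orthonormal basis B of L²(M), the adjoint of the multiplication map m: L²(M)⊗L²(M) → L²(M) is given by m*(x) = Σ_{y ∈ B} y ⊗ (y* x). -/
open scoped ComplexOrder TensorProduct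

/-!
If `ip x y = φ (star y * x)` then `ip x (y * z) = ip (star y * x) z`, so pairing `m* x` with
`b k ⊗ b l` gives `ip (star (b k) * x) (b l)`; by orthonormality, so does pairing
`∑ i, b i ⊗ (star (b i) * x)`. An orthonormal spanning family is a basis with coordinates
`ip · (b k)`, hence pairings with the `b k ⊗ b l` are the coordinates in the tensor product basis,
and the two vectors agree.
-/

theorem Module.Basis.tensorProduct_repr_apply_eq {R M N κ μ : Type*} [CommSemiring R]
    [AddCommMonoid M] [Module R M] [AddCommMonoid N] [Module R N]
    (bM : Module.Basis κ R M) (bN : Module.Basis μ R N) (F : M ⊗[R] N →+ R) (k : κ) (l : μ)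
    (hF : ∀ m n, F (m ⊗ₜ n) = bM.repr m k * bN.repr n l) (u : M ⊗[R] N) :
    (bM.tensorProduct bN).repr u (k, l) = F u := by
  induction u using TensorProduct.induction_on with
  | zero => simp
  | tmul m n => simp [hF, mul_comm]
  | add u v hu hv => simp [hu, hv]

section DeltaInner

variable {K A ι : Type*} [CommRing K] [Ring A] [Algebra K A] [StarMul A]
  {φ : A →ₗ[K] K} {ip : A → A → K}

theorem inner_mul_right_eq (hip : ∀ x y, ip x y = φ (star y * x)) (x y z : A) :
    ip x (y * z) = ip (star y * x) z := by
  simp only [hip, star_mul, mul_assoc]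

theorem exists_basis_repr_eq_inner [DecidableEq ι] (hip : ∀ x y, ip x y = φ (star y * x))
    {b : ι → A} (honb : ∀ i j, ip (b i) (b j) = if i = j then 1 else 0)
    (hspan : Submodule.span K (Set.range b) = ⊤) :
    ∃ B : Module.Basis ι K A, ∀ x i, B.repr x i = ip x (b i) := by
  let coord (i : ι) : Module.Dual K A := φ ∘ₗ LinearMap.mulLeft K (star (b i))
  have hcoord (x : A) (i : ι) : coord i x = ip x (b i) := (hip x (b i)).symm
  have hli : LinearIndependent K b :=
    .of_pairwise_dual_eq_zero_one b coord
      (fun i j hij => by simp [hcoord, honb, hij.symm]) (fun i => by simp [hcoord, honb])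
  let B := Module.Basis.mk hli hspan.ge
  have hB_self (j : ι) : (fun i => coord i (B j)) = Finsupp.single j 1 := by
    ext i
    simp [B, hcoord, honb, Finsupp.single_apply]
  refine ⟨B, fun x i => ?_⟩
  rw [← hcoord]
  exact B.repr_apply_eq (fun x i => coord i x) (fun _ _ => by ext; simp)
    (fun _ _ => by ext; simp) hB_self x i

theorem adjoint_mul'_apply_eq_sum [Fintype ι] [DecidableEq ι]
    (hip : ∀ x y, ip x y = φ (star y * x)) (b : ι → A)
    (honb : ∀ i j, ip (b i) (b j) = if i = j then 1 else 0)
    (hspan : Submodule.span K (Set.range b) = ⊤)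
    (ip2 : A ⊗[K] A → A ⊗[K] A → K)
    (hip2_add : ∀ u v w, ip2 (u + v) w = ip2 u w + ip2 v w)
    (hip2_tmul : ∀ x y z t, ip2 (x ⊗ₜ[K] y) (z ⊗ₜ[K] t) = ip x z * ip y t)
    (mstar : A →ₗ[K] A ⊗[K] A)
    (hadj : ∀ x ξ, ip2 (mstar x) ξ = ip x (LinearMap.mul' K A ξ)) (x : A) :
    mstar x = ∑ i, b i ⊗ₜ[K] (star (b i) * x) := by
  obtain ⟨B, hB⟩ := exists_basis_repr_eq_inner hip honb hspan
  let pairWith (k l : ι) : A ⊗[K] A →+ K :=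
    AddMonoidHom.mk' (fun u => ip2 u (b k ⊗ₜ b l)) fun u v => hip2_add u v _
  have hcoord (k l : ι) (u : A ⊗[K] A) :
      (B.tensorProduct B).repr u (k, l) = pairWith k l u :=
    B.tensorProduct_repr_apply_eq B _ k l (by simp [pairWith, hip2_tmul, hB]) u
  refine (B.tensorProduct B).repr.injective (Finsupp.ext fun ⟨k, l⟩ => ?_)
  rw [hcoord, hcoord, map_sum]
  simp [pairWith, hadj, inner_mul_right_eq hip, hip2_tmul, honb]

end DeltaInner

theorem stmt2_general (d : ℕ)
    (σ : Matrix (Fin d) (Fin d) ℂ)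
    (ip : Matrix (Fin d) (Fin d) ℂ → Matrix (Fin d) (Fin d) ℂ → ℂ)
    (hip : ∀ x y, ip x y = (d : ℂ) * ((star y) * x * σ).trace)
    -- an orthonormal basis of L²(M)
    {ι : Type*} [Fintype ι] [DecidableEq ι] (b : ι → Matrix (Fin d) (Fin d) ℂ)
    (honb : ∀ i j, ip (b i) (b j) = if i = j then 1 else 0)
    (hspan : Submodule.span ℂ (Set.range b) = ⊤)
    -- the tensor product inner product on L²(M ⊗ M)
    (ip2 : (Matrix (Fin d) (Fin d) ℂ ⊗[ℂ] Matrix (Fin d) (Fin d) ℂ) →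
      (Matrix (Fin d) (Fin d) ℂ ⊗[ℂ] Matrix (Fin d) (Fin d) ℂ) → ℂ)
    (hip2₁ : ∀ u v w, ip2 (u + v) w = ip2 u w + ip2 v w)
    (hip2t : ∀ x y z t, ip2 (x ⊗ₜ[ℂ] y) (z ⊗ₜ[ℂ] t) = ip x z * ip y t)
    -- `m*`, the adjoint of the multiplication map `m = LinearMap.mul'`
    (mstar : Matrix (Fin d) (Fin d) ℂ →ₗ[ℂ]
      Matrix (Fin d) (Fin d) ℂ ⊗[ℂ] Matrix (Fin d) (Fin d) ℂ)
    (hadj : ∀ x ξ, ip2 (mstar x) ξ =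
      ip x (LinearMap.mul' ℂ (Matrix (Fin d) (Fin d) ℂ) ξ)) :
    ∀ x, mstar x = ∑ i, (b i) ⊗ₜ[ℂ] ((star (b i)) * x) :=
  adjoint_mul'_apply_eq_sum
    (φ := (d : ℂ) • (Matrix.traceLinearMap (Fin d) ℂ ℂ ∘ₗ LinearMap.mulRight ℂ σ))
    (by simp [hip]) b honb hspan ip2 hip2₁ hip2t mstar hadj

/-- With `M = ℂ^{d×d}`, delta-form `δ(x) = d·tr(xσ)` and an orthonormal
basis `b` of `L²(M)`, the adjoint of the multiplication map satisfies
`m*(x) = ∑_{y ∈ B} y ⊗ (y* x)`. -/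
theorem stmt2 (d : ℕ) (hd : 0 < d)
    (σ : Matrix (Fin d) (Fin d) ℂ) (hσ : σ.PosDef)
    (htr : (σ⁻¹).trace = (d : ℂ))
    (ip : Matrix (Fin d) (Fin d) ℂ → Matrix (Fin d) (Fin d) ℂ → ℂ)
    (hip : ∀ x y, ip x y = (d : ℂ) * ((star y) * x * σ).trace)
    -- an orthonormal basis of L²(M)
    {ι : Type*} [Fintype ι] [DecidableEq ι] (b : ι → Matrix (Fin d) (Fin d) ℂ)
    (honb : ∀ i j, ip (b i) (b j) = if i = j then 1 else 0)
    (hspan : Submodule.span ℂ (Set.range b) = ⊤)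
    -- the tensor product inner product on L²(M ⊗ M)
    (ip2 : (Matrix (Fin d) (Fin d) ℂ ⊗[ℂ] Matrix (Fin d) (Fin d) ℂ) →
      (Matrix (Fin d) (Fin d) ℂ ⊗[ℂ] Matrix (Fin d) (Fin d) ℂ) → ℂ)
    (hip2₁ : ∀ u v w, ip2 (u + v) w = ip2 u w + ip2 v w)
    (hip2₂ : ∀ u v w, ip2 u (v + w) = ip2 u v + ip2 u w)
    (hip2t : ∀ x y z t, ip2 (x ⊗ₜ[ℂ] y) (z ⊗ₜ[ℂ] t) = ip x z * ip y t)
    -- `m*`, the adjoint of the multiplication map `m = LinearMap.mul'`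
    (mstar : Matrix (Fin d) (Fin d) ℂ →ₗ[ℂ]
      Matrix (Fin d) (Fin d) ℂ ⊗[ℂ] Matrix (Fin d) (Fin d) ℂ)
    (hadj : ∀ x ξ, ip2 (mstar x) ξ =
      ip x (LinearMap.mul' ℂ (Matrix (Fin d) (Fin d) ℂ) ξ)) :
    ∀ x, mstar x = ∑ i, (b i) ⊗ₜ[ℂ] ((star (b i)) * x) :=
  stmt2_general d σ ip hip b honb hspan ip2 hip2₁ hip2t mstar hadj
end

section
/- Let (M, δ) be a matrix algebra with delta-form, H a Hilbert-M-bimodule, and φ_L: L²(M) ⊗ H → H the bounded extension of ⟦x⟧ ⊗ ξ ↦ x·ξ. Then the adjoint is φ_L*(ξ) = Σ_{x ∈ B} ⟦x⟧ ⊗ x*·ξ for any orthonormal basis B of L²(M), and φ_L ∘ φ_L* = id_H. -/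
open scoped ComplexOrder TensorProduct

local notation "⟪" x ", " y "⟫" => @inner ℂ _ _ x y

/-!
Orthonormality of `b` for `⟨x, y⟩ = d·tr(y* x σ)` says that `x ↦ d·tr(b_j* x σ)` is the `j`-th
coordinate in `b`. Hence every `u ∈ L²(M) ⊗ H` is `∑ b_j ⊗ c_j u`, where `c_j u ∈ H` satisfies
`⟨u, b_j ⊗ η⟩ = ⟪η, c_j u⟫`; for `u = φ_L* ξ` the adjoint relation gives `c_j u = b_j*·ξ`.
Expanding `E_{ts} σ⁻¹` in the basis yields the completeness relation
`d ∑ b_j b_j* = tr(σ⁻¹)·1 = d·1`, so `φ_L φ_L* ξ = (∑ b_j b_j*)·ξ = ξ`.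
-/

open Matrix TensorProduct

section DualFamily

variable {R M N ι : Type*} [CommSemiring R] [AddCommMonoid M] [Module R M]
  [AddCommMonoid N] [Module R N] [Fintype ι]
  {b : ι → M} {f : ι → Module.Dual R M}

theorem sum_dual_smul_eq_self_of_span_eq_top [DecidableEq ι]
    (hfb : ∀ i j, f j (b i) = if i = j then 1 else 0)
    (hspan : Submodule.span R (Set.range b) = ⊤) (x : M) :
    ∑ i, f i x • b i = x := by
  obtain ⟨c, rfl⟩ := (Submodule.mem_span_range_iff_exists_fun R).mp
    (hspan ▸ Submodule.mem_top : x ∈ Submodule.span R (Set.range b))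
  simp [hfb]

theorem sum_tmul_lid_rTensor_eq_self (hexp : ∀ x, ∑ i, f i x • b i = x) (u : M ⊗[R] N) :
    ∑ i, b i ⊗ₜ[R] TensorProduct.lid R N ((f i).rTensor N u) = u := by
  induction u using TensorProduct.induction_on with
  | zero => simp
  | tmul x ξ =>
    simp only [LinearMap.rTensor_tmul, TensorProduct.lid_tmul, ← smul_tmul, ← sum_tmul, hexp]
  | add u v hu hv => simp only [map_add, tmul_add, Finset.sum_add_distrib, hu, hv]

end DualFamily

theorem apply_tmul_eq_inner_lid_rTensor {M H : Type*} [AddCommGroup M] [Module ℂ M]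
    [NormedAddCommGroup H] [InnerProductSpace ℂ H]
    (ip : M ⊗[ℂ] H → M ⊗[ℂ] H → ℂ) (g : M → Module.Dual ℂ M)
    (hadd : ∀ u v w, ip (u + v) w = ip u w + ip v w)
    (htmul : ∀ x y ξ η, ip (x ⊗ₜ ξ) (y ⊗ₜ η) = g y x * ⟪η, ξ⟫)
    (u : M ⊗[ℂ] H) (y : M) (η : H) :
    ip u (y ⊗ₜ η) = ⟪η, TensorProduct.lid ℂ H ((g y).rTensor H u)⟫ := by
  induction u using TensorProduct.induction_on with
  | zero => simpa using hadd 0 0 (y ⊗ₜ η)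
  | tmul x ξ => rw [htmul, LinearMap.rTensor_tmul, TensorProduct.lid_tmul, inner_smul_right]
  | add u v hu hv => rw [hadd, hu, hv, map_add, map_add, inner_add_right]

section DeltaInner

variable {n ι : Type*} [Fintype n] [DecidableEq n] [Fintype ι] [DecidableEq ι]

def deltaInner (c : ℂ) (σ y : Matrix n n ℂ) : Module.Dual ℂ (Matrix n n ℂ) :=
  c • (traceLinearMap n ℂ ℂ ∘ₗ LinearMap.mulRight ℂ σ ∘ₗ LinearMap.mulLeft ℂ (star y))

theorem deltaInner_apply (c : ℂ) (σ y x : Matrix n n ℂ) :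
    deltaInner c σ y x = c * (star y * x * σ).trace := rfl

variable {c : ℂ} {σ : Matrix n n ℂ} {b : ι → Matrix n n ℂ}

theorem smul_sum_mul_star_eq (hσ : IsUnit σ)
    (honb : ∀ i j, c * (star (b j) * b i * σ).trace = if i = j then 1 else 0)
    (hspan : Submodule.span ℂ (Set.range b) = ⊤) :
    c • ∑ i, b i * star (b i) = σ⁻¹.trace • (1 : Matrix n n ℂ) := by
  have hexp := sum_dual_smul_eq_self_of_span_eq_top (f := deltaInner c σ ∘ b) honb hspan
  have hcol : ∀ s t, ∑ i, (c * star (b i) s t) • b i = single t s 1 * σ⁻¹ := by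
    intro s t
    convert hexp (single t s 1 * σ⁻¹) using 3 with i
    rw [Function.comp_apply, deltaInner_apply, Matrix.mul_assoc, Matrix.mul_assoc,
      nonsing_inv_mul _ ((isUnit_iff_isUnit_det σ).mp hσ), Matrix.mul_one, trace_mul_single]
    simp
  ext r t
  calc (c • ∑ i, b i * star (b i) : Matrix n n ℂ) r t
        = ∑ s, (∑ i, (c * star (b i) s t) • b i : Matrix n n ℂ) r s := by
        simp only [Matrix.smul_apply, Matrix.sum_apply, mul_apply, smul_eq_mul, Finset.mul_sum]
        rw [Finset.sum_comm]
        exact Finset.sum_congr rfl fun _ _ => Finset.sum_congr rfl fun _ _ => by ring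
    _ = ∑ s, (single t s 1 * σ⁻¹ : Matrix n n ℂ) r s := by simp only [hcol]
    _ = (σ⁻¹.trace • (1 : Matrix n n ℂ)) r t := by
        by_cases hrt : r = t
        · subst hrt
          simp [trace]
        · simp [hrt]

end DeltaInner

theorem sum_mul_star_eq_one {ι : Type*} [Fintype ι] [DecidableEq ι] {d : ℕ}
    {σ : Matrix (Fin d) (Fin d) ℂ} {b : ι → Matrix (Fin d) (Fin d) ℂ} (htr : σ⁻¹.trace = d)
    (honb : ∀ i j, (d : ℂ) * (star (b j) * b i * σ).trace = if i = j then 1 else 0)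
    (hspan : Submodule.span ℂ (Set.range b) = ⊤) :
    ∑ i, b i * star (b i) = 1 := by
  rcases eq_or_ne d 0 with rfl | hd
  · exact Subsingleton.elim _ _
  have hd' : (d : ℂ) ≠ 0 := Nat.cast_ne_zero.mpr hd
  -- Mathlib's `σ⁻¹` is `0` for singular `σ`, so `tr σ⁻¹ = d ≠ 0` forces invertibility.
  have hσ : IsUnit σ := by
    rw [isUnit_iff_isUnit_det]
    by_contra h
    rw [nonsing_inv_apply_not_isUnit σ h, trace_zero] at htr
    exact hd' htr.symm
  have hcompl := smul_sum_mul_star_eq hσ honb hspan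
  rw [htr] at hcompl
  exact smul_right_injective _ hd' hcompl

theorem stmt7_general (d : ℕ)
    (σ : Matrix (Fin d) (Fin d) ℂ)
    (htr : (σ⁻¹).trace = (d : ℂ))
    {H : Type*} [NormedAddCommGroup H] [InnerProductSpace ℂ H]
    (lH : Matrix (Fin d) (Fin d) ℂ →ₐ[ℂ] Module.End ℂ H)
    (hlstar : ∀ x (ξ η : H), ⟪lH x ξ, η⟫ = ⟪ξ, lH (star x) η⟫)
    -- an orthonormal basis of L²(M)
    {ι : Type*} [Fintype ι] [DecidableEq ι] (b : ι → Matrix (Fin d) (Fin d) ℂ)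
    (honb : ∀ i j, (d : ℂ) * ((star (b j)) * (b i) * σ).trace = if i = j then 1 else 0)
    (hspan : Submodule.span ℂ (Set.range b) = ⊤)
    -- the tensor product inner product on L²(M) ⊗ H, linear in the first variable
    (ipT : (Matrix (Fin d) (Fin d) ℂ ⊗[ℂ] H) →
      (Matrix (Fin d) (Fin d) ℂ ⊗[ℂ] H) → ℂ)
    (hipT₁ : ∀ u v w, ipT (u + v) w = ipT u w + ipT v w)
    (hipTt : ∀ (x y : Matrix (Fin d) (Fin d) ℂ) (ξ η : H),
      ipT (x ⊗ₜ[ℂ] ξ) (y ⊗ₜ[ℂ] η) = ((d : ℂ) * ((star y) * x * σ).trace) * ⟪η, ξ⟫)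
    -- φ_L and its adjoint φ_L*
    (φL : Matrix (Fin d) (Fin d) ℂ ⊗[ℂ] H →ₗ[ℂ] H)
    (hφL : ∀ (x : Matrix (Fin d) (Fin d) ℂ) (ξ : H), φL (x ⊗ₜ[ℂ] ξ) = lH x ξ)
    (φLstar : H →ₗ[ℂ] Matrix (Fin d) (Fin d) ℂ ⊗[ℂ] H)
    (hadj : ∀ ξ u, ipT (φLstar ξ) u = ⟪φL u, ξ⟫) :
    (∀ ξ, φLstar ξ = ∑ i, (b i) ⊗ₜ[ℂ] (lH (star (b i)) ξ)) ∧
      (∀ ξ, φL (φLstar ξ) = ξ) := by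
  have hexp := sum_dual_smul_eq_self_of_span_eq_top (f := deltaInner d σ ∘ b) honb hspan
  have hcoord : ∀ ξ j,
      TensorProduct.lid ℂ H ((deltaInner d σ (b j)).rTensor H (φLstar ξ)) = lH (star (b j)) ξ :=
    fun ξ j => ext_inner_left ℂ fun η => by
      rw [← apply_tmul_eq_inner_lid_rTensor ipT (deltaInner d σ) hipT₁ hipTt, hadj, hφL, hlstar]
  have hstar : ∀ ξ, φLstar ξ = ∑ i, b i ⊗ₜ[ℂ] lH (star (b i)) ξ := fun ξ => by
    simpa only [Function.comp_apply, hcoord] using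
      (sum_tmul_lid_rTensor_eq_self hexp (φLstar ξ)).symm
  refine ⟨hstar, fun ξ => ?_⟩
  rw [hstar, map_sum]
  simp only [hφL, ← Module.End.mul_apply, ← map_mul, ← LinearMap.sum_apply, ← map_sum,
    sum_mul_star_eq_one htr honb hspan, map_one, Module.End.one_apply]

/-- For a Hilbert-`M`-bimodule `H` over the matrix algebra `M = ℂ^{d×d}` with
delta-form `δ(x) = d·tr(xσ)`, the map `φ_L : L²(M) ⊗ H → H`, `⟦x⟧ ⊗ ξ ↦ x·ξ`, has adjoint
`φ_L*(ξ) = ∑_{x ∈ B} ⟦x⟧ ⊗ x*·ξ` for any orthonormal basis `B` of `L²(M)`, and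
`φ_L ∘ φ_L* = id_H`. -/
theorem stmt7 (d : ℕ) (hd : 0 < d)
    (σ : Matrix (Fin d) (Fin d) ℂ) (hσ : σ.PosDef)
    (htr : (σ⁻¹).trace = (d : ℂ))
    {H : Type*} [NormedAddCommGroup H] [InnerProductSpace ℂ H]
    (lH : Matrix (Fin d) (Fin d) ℂ →ₐ[ℂ] Module.End ℂ H)
    (rH : (Matrix (Fin d) (Fin d) ℂ)ᵐᵒᵖ →ₐ[ℂ] Module.End ℂ H)
    (hcomm : ∀ x y, lH x * rH (MulOpposite.op y) = rH (MulOpposite.op y) * lH x)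
    (hlstar : ∀ x (ξ η : H), ⟪lH x ξ, η⟫ = ⟪ξ, lH (star x) η⟫)
    (hrstar : ∀ y (ξ η : H), ⟪rH (MulOpposite.op y) ξ, η⟫ =
      ⟪ξ, rH (MulOpposite.op (star y)) η⟫)
    -- an orthonormal basis of L²(M)
    {ι : Type*} [Fintype ι] [DecidableEq ι] (b : ι → Matrix (Fin d) (Fin d) ℂ)
    (honb : ∀ i j, (d : ℂ) * ((star (b j)) * (b i) * σ).trace = if i = j then 1 else 0)
    (hspan : Submodule.span ℂ (Set.range b) = ⊤)
    -- the tensor product inner product on L²(M) ⊗ H, linear in the first variable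
    (ipT : (Matrix (Fin d) (Fin d) ℂ ⊗[ℂ] H) →
      (Matrix (Fin d) (Fin d) ℂ ⊗[ℂ] H) → ℂ)
    (hipT₁ : ∀ u v w, ipT (u + v) w = ipT u w + ipT v w)
    (hipT₂ : ∀ u v w, ipT u (v + w) = ipT u v + ipT u w)
    (hipTt : ∀ (x y : Matrix (Fin d) (Fin d) ℂ) (ξ η : H),
      ipT (x ⊗ₜ[ℂ] ξ) (y ⊗ₜ[ℂ] η) = ((d : ℂ) * ((star y) * x * σ).trace) * ⟪η, ξ⟫)
    -- φ_L and its adjoint φ_L*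
    (φL : Matrix (Fin d) (Fin d) ℂ ⊗[ℂ] H →ₗ[ℂ] H)
    (hφL : ∀ (x : Matrix (Fin d) (Fin d) ℂ) (ξ : H), φL (x ⊗ₜ[ℂ] ξ) = lH x ξ)
    (φLstar : H →ₗ[ℂ] Matrix (Fin d) (Fin d) ℂ ⊗[ℂ] H)
    (hadj : ∀ ξ u, ipT (φLstar ξ) u = ⟪φL u, ξ⟫) :
    (∀ ξ, φLstar ξ = ∑ i, (b i) ⊗ₜ[ℂ] (lH (star (b i)) ξ)) ∧
      (∀ ξ, φL (φLstar ξ) = ξ) :=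
  stmt7_general d σ htr lH hlstar b honb hspan ipT hipT₁ hipTt φL hφL φLstar hadj
end

section
/- Let M be a matrix algebra with delta-form δ and GNS space L²(M). For x_{i,j} ∈ M ⊗ M nonzero elements (indexed by i,j in a finite index set) satisfying the cocycle-type relation (X_{i,j} ⊗ 1)(1 ⊗ σ^{1/2} ⊗ 1)(1 ⊗ X_{j,k})(1 ⊗ σ^{-1/2} ⊗ 1) = (X_{i,k})_{13} for all i,j,k, where (a ⊗ b)_{13} = a ⊗ 1 ⊗ b: there exists an invertible α (a family α_i of invertible elements) such that X_{i,j} = α_i ⊗ σ^{1/2} α_j^{-1} σ^{-1/2}. -/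
/-!
Fix `i₀` and a functional `ψ` on `M_{i₀}` with `(id ⊗ ψ)(X_{i₀ i₀}) ≠ 0`, and put
`α_i = (id ⊗ ψ)(X_{i i₀})`. Writing `θ_j` for conjugation by `σ_j^{1/2}`, slicing the relation for
`(i, j, i₀)` with `ψ` on the third leg gives `X_{ij} (1 ⊗ θ_j(α_j)) = α_i ⊗ 1`. For `i = i₀`, slicing
this on the first leg with a functional sending `α_{i₀}` to `1` shows that `θ_j(α_j)` has a left
inverse, hence is invertible in the Dedekind-finite algebra `M_j`; so `X_{ij} = α_i ⊗ θ_j(α_j)⁻¹`.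
-/

open scoped ComplexOrder TensorProduct

open Algebra.TensorProduct

namespace TensorProduct

section Slice

variable {K V W : Type*} [CommSemiring K] [AddCommMonoid V] [Module K V]
  [AddCommMonoid W] [Module K W]

def sliceLeft (φ : Module.Dual K V) : V ⊗[K] W →ₗ[K] W :=
  (TensorProduct.lid K W).toLinearMap ∘ₗ φ.rTensor W

def sliceRight (ψ : Module.Dual K W) : V ⊗[K] W →ₗ[K] V :=
  (TensorProduct.rid K V).toLinearMap ∘ₗ ψ.lTensor V

@[simp]
lemma sliceLeft_tmul (φ : Module.Dual K V) (v : V) (w : W) :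
    sliceLeft φ (v ⊗ₜ[K] w) = φ v • w := by
  simp [sliceLeft]

@[simp]
lemma sliceRight_tmul (ψ : Module.Dual K W) (v : V) (w : W) :
    sliceRight ψ (v ⊗ₜ[K] w) = ψ w • v := by
  simp [sliceRight]

lemma sliceRight_rTensor {U : Type*} [AddCommMonoid U] [Module K U] (f : V →ₗ[K] U)
    (ψ : Module.Dual K W) (x : V ⊗[K] W) :
    sliceRight ψ (f.rTensor W x) = f (sliceRight ψ x) := by
  induction x using TensorProduct.induction_on with
  | zero => simp
  | tmul v w => simp
  | add x y hx hy => simp [hx, hy]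

end Slice

lemma exists_sliceRight_ne_zero {K V W : Type*} [Field K] [AddCommGroup V] [Module K V]
    [AddCommGroup W] [Module K W] {x : V ⊗[K] W} (hx : x ≠ 0) :
    ∃ ψ : Module.Dual K W, sliceRight ψ x ≠ 0 := by
  classical
  let b := Module.Free.chooseBasis K W
  obtain ⟨i, hi⟩ := Finsupp.ne_iff.mp ((equivFinsuppOfBasisRight b).map_ne_zero_iff.mpr hx)
  rw [equivFinsuppOfBasisRight_apply] at hi
  exact ⟨b.coord i, hi⟩

section Algebra

variable {K A B C : Type*} [CommSemiring K] [Semiring A] [Algebra K A] [Semiring B] [Algebra K B]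
  [Semiring C] [Algebra K C]

variable (C) in
def leg12 : A ⊗[K] B →ₗ[K] A ⊗[K] (B ⊗[K] C) :=
  ((TensorProduct.mk K B C).flip 1).lTensor A

variable (B) in
def leg13 : A ⊗[K] C →ₗ[K] A ⊗[K] (B ⊗[K] C) :=
  (TensorProduct.mk K B C 1).lTensor A

lemma lTensor_sliceRight_leg12_mul (ψ : Module.Dual K C) (x : A ⊗[K] B) (y : B ⊗[K] C) :
    (sliceRight ψ).lTensor A (leg12 C x * (1 ⊗ₜ[K] y)) = x * (1 ⊗ₜ[K] sliceRight ψ y) := by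
  induction x using TensorProduct.induction_on with
  | zero => simp
  | add x x' hx hx' => simp only [map_add, add_mul, hx, hx']
  | tmul a b =>
    induction y using TensorProduct.induction_on with
    | zero => simp
    | add y y' hy hy' => simp only [map_add, tmul_add, mul_add, hy, hy']
    | tmul b' c => simp [leg12, tmul_smul]

lemma lTensor_sliceRight_leg13 (ψ : Module.Dual K C) (x : A ⊗[K] C) :
    (sliceRight ψ).lTensor A (leg13 B x) = sliceRight ψ x ⊗ₜ[K] 1 := by
  induction x using TensorProduct.induction_on with
  | zero => simp
  | add x x' hx hx' => simp only [map_add, add_tmul, hx, hx']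
  | tmul a c => simp [leg13, smul_tmul']

lemma sliceLeft_mul_one_tmul (φ : Module.Dual K A) (x : A ⊗[K] B) (b : B) :
    sliceLeft φ (x * (1 ⊗ₜ[K] b)) = sliceLeft φ x * b := by
  induction x using TensorProduct.induction_on with
  | zero => simp
  | add x x' hx hx' => simp only [add_mul, map_add, hx, hx']
  | tmul a b' => simp

lemma eq_tmul_inv_of_mul_one_tmul_eq {x : A ⊗[K] B} {a : A} {u : Bˣ}
    (h : x * (1 ⊗ₜ[K] (u : B)) = a ⊗ₜ[K] 1) : x = a ⊗ₜ[K] ↑u⁻¹ := by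
  calc x = x * (1 ⊗ₜ[K] (u : B)) * (1 ⊗ₜ[K] ↑u⁻¹) := by
        rw [mul_assoc, tmul_mul_tmul, one_mul, u.mul_inv, ← one_def, mul_one]
    _ = a ⊗ₜ[K] ↑u⁻¹ := by rw [h, tmul_mul_tmul, mul_one, one_mul]

end Algebra

lemma isUnit_of_mul_one_tmul_eq_tmul_one {K A B : Type*} [Field K] [Ring A] [Algebra K A]
    [Semiring B] [Algebra K B] [IsDedekindFiniteMonoid B] {x : A ⊗[K] B} {a : A} {b : B}
    (ha : a ≠ 0) (h : x * (1 ⊗ₜ[K] b) = a ⊗ₜ[K] 1) : IsUnit b := by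
  obtain ⟨φ, hφ⟩ := Module.Projective.exists_dual_eq_one K ha
  have hb : sliceLeft φ x * b = 1 := by
    simpa [sliceLeft_mul_one_tmul, hφ] using congrArg (sliceLeft φ) h
  exact IsUnit.of_mul_eq_one_right _ hb

end TensorProduct

open TensorProduct

theorem exists_units_eq_tmul_of_leg12_mul_eq_leg13 {K ι : Type*} [Field K] {A : ι → Type*}
    [∀ i, Ring (A i)] [∀ i, Algebra K (A i)] [∀ i, IsDedekindFiniteMonoid (A i)]
    (θ : ∀ i, A i ≃ₐ[K] A i) (X : ∀ i j, A i ⊗[K] A j) (i₀ : ι) (hX : X i₀ i₀ ≠ 0)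
    (hrel : ∀ i j,
      leg12 (A i₀) (X i j) * (1 ⊗ₜ[K] (θ j).toLinearMap.rTensor (A i₀) (X j i₀))
        = leg13 (A j) (X i i₀)) :
    ∃ α : ∀ i, (A i)ˣ, ∀ i j, X i j = (α i : A i) ⊗ₜ[K] θ j ↑(α j)⁻¹ := by
  obtain ⟨ψ, hψ⟩ := exists_sliceRight_ne_zero hX
  have key : ∀ i j,
      X i j * (1 ⊗ₜ[K] θ j (sliceRight ψ (X j i₀))) = sliceRight ψ (X i i₀) ⊗ₜ[K] 1 := by
    intro i j
    simpa [lTensor_sliceRight_leg12_mul, lTensor_sliceRight_leg13, sliceRight_rTensor]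
      using congrArg ((sliceRight ψ).lTensor (A i)) (hrel i j)
  have hunit : ∀ j, IsUnit (sliceRight ψ (X j i₀)) := fun j =>
    (MulEquiv.isUnit_map (θ j)).mp (isUnit_of_mul_one_tmul_eq_tmul_one hψ (key i₀ j))
  refine ⟨fun i => (hunit i).unit, fun i j => ?_⟩
  simpa using eq_tmul_inv_of_mul_one_tmul_eq (u := Units.map (θ j : A j →* A j) (hunit j).unit)
    (key i j)

lemma rTensor_conj_apply {K B C : Type*} [CommSemiring K] [Semiring B] [Algebra K B]
    [Semiring C] [Algebra K C] (u : Bˣ) (y : B ⊗[K] C) :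
    (MulSemiringAction.toAlgEquiv K B (ConjAct.toConjAct u)).toLinearMap.rTensor C y
      = ((u : B) ⊗ₜ[K] (1 : C)) * y * ((↑u⁻¹ : B) ⊗ₜ[K] (1 : C)) := by
  induction y using TensorProduct.induction_on with
  | zero => simp
  | add y y' hy hy' => simp only [map_add, mul_add, add_mul, hy, hy']
  | tmul b c => simp [ConjAct.units_smul_def]

/-- Let `M_i` be matrix algebras, `τ_j = σ_j^{1/2}` positive invertible.
Given nonzero `X_{i,j} ∈ M_i ⊗ M_j` satisfying the cocycle-type relation
`(X_{i,j} ⊗ 1)(1 ⊗ σ_j^{1/2} ⊗ 1)(1 ⊗ X_{j,k})(1 ⊗ σ_j^{-1/2} ⊗ 1) = (X_{i,k})₁₃`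
for all `i,j,k`, there exists a family of invertible elements `α_i ∈ M_i` such that
`X_{i,j} = α_i ⊗ σ_j^{1/2} α_j⁻¹ σ_j^{-1/2}`. -/
theorem stmt12 {I : Type*} [Nonempty I] (d : I → ℕ)
    (τ : ∀ i, Matrix (Fin (d i)) (Fin (d i)) ℂ)
    (hτ : ∀ i, (τ i).PosDef)
    (X : ∀ i j, Matrix (Fin (d i)) (Fin (d i)) ℂ ⊗[ℂ] Matrix (Fin (d j)) (Fin (d j)) ℂ)
    (hX : ∀ i j, X i j ≠ 0)
    (hrel : ∀ i j k,
      (TensorProduct.map (LinearMap.id)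
          ((TensorProduct.mk ℂ (Matrix (Fin (d j)) (Fin (d j)) ℂ)
              (Matrix (Fin (d k)) (Fin (d k)) ℂ)).flip
            (1 : Matrix (Fin (d k)) (Fin (d k)) ℂ)) (X i j))
        * ((1 : Matrix (Fin (d i)) (Fin (d i)) ℂ) ⊗ₜ[ℂ]
            ((τ j) ⊗ₜ[ℂ] (1 : Matrix (Fin (d k)) (Fin (d k)) ℂ)))
        * (TensorProduct.mk ℂ (Matrix (Fin (d i)) (Fin (d i)) ℂ)
            (Matrix (Fin (d j)) (Fin (d j)) ℂ ⊗[ℂ] Matrix (Fin (d k)) (Fin (d k)) ℂ)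
            (1 : Matrix (Fin (d i)) (Fin (d i)) ℂ) (X j k))
        * ((1 : Matrix (Fin (d i)) (Fin (d i)) ℂ) ⊗ₜ[ℂ]
            ((τ j)⁻¹ ⊗ₜ[ℂ] (1 : Matrix (Fin (d k)) (Fin (d k)) ℂ)))
      = TensorProduct.map LinearMap.id
          (TensorProduct.mk ℂ (Matrix (Fin (d j)) (Fin (d j)) ℂ)
            (Matrix (Fin (d k)) (Fin (d k)) ℂ)
            (1 : Matrix (Fin (d j)) (Fin (d j)) ℂ)) (X i k)) :
    ∃ α : ∀ i, Matrix (Fin (d i)) (Fin (d i)) ℂ,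
      (∀ i, IsUnit (α i)) ∧
        ∀ i j, X i j = α i ⊗ₜ[ℂ] (τ j * (α j)⁻¹ * (τ j)⁻¹) := by
  obtain ⟨i₀⟩ := ‹Nonempty I›
  let θ i := MulSemiringAction.toAlgEquiv ℂ (Matrix (Fin (d i)) (Fin (d i)) ℂ)
    (ConjAct.toConjAct (hτ i).isUnit.unit)
  obtain ⟨α, hα⟩ := exists_units_eq_tmul_of_leg12_mul_eq_leg13 θ X i₀ (hX i₀ i₀) fun i j => by
    rw [rTensor_conj_apply, Matrix.coe_units_inv, IsUnit.unit_spec, ← includeRight_apply,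
      map_mul, map_mul, ← mul_assoc, ← mul_assoc]
    exact hrel i j i₀
  refine ⟨fun i => α i, fun i => (α i).isUnit, fun i j => ?_⟩
  simp [hα i j, θ, ConjAct.units_smul_def, Matrix.coe_units_inv]
end

section
/- Let φ be a faithful linear functional on a *-algebra B, and suppose ς: B → B is a bijective linear map satisfying φ(xy) = φ(ς(y)x) for all x, y ∈ B. Then ς is multiplicative: ς(xy) = ς(x)ς(y) for all x, y ∈ B. -/
/-- Let `φ` be a faithful linear functional on a (not necessarily unital)
`*`-algebra `B`, and `ς : B → B` a bijective linear map with `φ(xy) = φ(ς(y)x)` for all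
`x, y`.  Then `ς` is multiplicative. -/
theorem stmt14 {B : Type*} [NonUnitalRing B] [StarRing B] [Module ℂ B]
    [IsScalarTower ℂ B B] [SMulCommClass ℂ B B]
    (φ : B →ₗ[ℂ] ℂ)
    (hfaithful : ∀ b : B, (∀ x : B, φ (b * x) = 0) → b = 0)
    (ς : B →ₗ[ℂ] B) (hbij : Function.Bijective ς)
    (hmod : ∀ x y : B, φ (x * y) = φ (ς y * x)) :
    ∀ x y : B, ς (x * y) = ς x * ς y := by
  intro x y
  have key : ∀ z : B, φ ((ς (x * y) - ς x * ς y) * z) = 0 := by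
    intro z
    have h1 : φ (ς (x * y) * z) = φ (z * (x * y)) := (hmod z (x * y)).symm
    have h2 : φ (z * (x * y)) = φ ((ς x * ς y) * z) := by
      calc φ (z * (x * y)) = φ ((z * x) * y) := by rw [mul_assoc]
        _ = φ (ς y * (z * x)) := hmod (z * x) y
        _ = φ ((ς y * z) * x) := by rw [mul_assoc]
        _ = φ (ς x * (ς y * z)) := hmod (ς y * z) x
        _ = φ ((ς x * ς y) * z) := by rw [mul_assoc]
    rw [sub_mul, map_sub, h1, h2, sub_self]
  have := hfaithful _ key
  exact sub_eq_zero.mp this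
end

section
/- Let M = C^{d×d} with delta-form δ(x) = d·tr(xσ) where σ is diagonal. Let A: M → M be a linear map commuting with left and right multiplications appropriately (M-bimodular in the graph sense), and define P := Σ_{x ∈ B} ρ(x) ⊗ λ(A(μ^{1/2}(x)*)) on L²(M) ⊗ L²(M), B an orthonormal basis of L²(M). Then (δ ⊗ id) P ⟦E_{k,k} ⊗ E_{m,m}⟧ = ⟦A(E_{k,k}) E_{m,m}⟧. -/
/-!
Write `⟨x, y⟩ = d·tr(x* y σ)` for the inner product of `L²(M)` and `τ = σ^{1/2}`.
Applying `δ ⊗ id` to `P (E ⊗ F)` gives `A(∑ₓ δ(E · τ x τ⁻¹) (τ⁻¹ x τ)*) F`, and since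
`δ(E τ x τ⁻¹) = d·tr(τ E τ x)` is the conjugate of `⟨x, τ E* τ⁻¹⟩`, the sum inside is the
`*`-image, conjugated back by `τ`, of the expansion of `τ E* τ⁻¹` in the orthonormal basis,
i.e. it is `E` itself.
-/

open scoped ComplexOrder TensorProduct

theorem sum_smul_eq_of_biorthogonal {R M ι : Type*} [CommSemiring R]
    [AddCommMonoid M] [Module R M] [Fintype ι] [DecidableEq ι]
    (b : ι → M) (f : ι → M →ₗ[R] R) (hbf : ∀ i j, f j (b i) = if i = j then 1 else 0)
    (hspan : Submodule.span R (Set.range b) = ⊤) (x : M) :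
    ∑ i, f i x • b i = x := by
  have hid : ∑ i, (f i).smulRight (b i) = LinearMap.id := by
    refine LinearMap.ext_on hspan ?_
    rintro _ ⟨j, rfl⟩
    simp [hbf]
  simpa using LinearMap.congr_fun hid x

namespace Matrix

variable {n K : Type*} [Fintype n] [DecidableEq n] [Field K] [StarRing K]

def gnsInner (d : ℕ) (σ x : Matrix n n K) : Matrix n n K →ₗ[K] K :=
  (d : K) • (traceLinearMap n K K ∘ₗ LinearMap.mulRight K σ ∘ₗ LinearMap.mulLeft K (star x))

@[simp]
theorem gnsInner_apply (d : ℕ) (σ x y : Matrix n n K) :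
    gnsInner d σ x y = d * (star x * y * σ).trace :=
  rfl

theorem star_gnsInner_conj_eq {σ τ : Matrix n n K} (hτ : τ.IsHermitian) (hτu : IsUnit τ.det)
    (hττ : τ * τ = σ) (d : ℕ) (x E : Matrix n n K) :
    star (gnsInner d σ x (τ * Eᴴ * τ⁻¹)) = d * (E * (τ * x * τ⁻¹) * σ).trace := by
  subst hττ
  rw [gnsInner_apply, star_mul', star_natCast, star_eq_conjTranspose, ← trace_conjTranspose]
  congr 1
  simp only [conjTranspose_mul, conjTranspose_conjTranspose, hτ.eq, mul_assoc,
    nonsing_inv_mul_cancel_left _ _ hτu]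
  rw [trace_mul_comm τ]
  simp only [mul_assoc]

theorem sum_trace_mul_conj_smul_star_conj {d : ℕ} {σ τ : Matrix n n K} {ι : Type*} [Fintype ι]
    [DecidableEq ι] {b : ι → Matrix n n K}
    (honb : ∀ i j, (d : K) * (star (b j) * b i * σ).trace = if i = j then 1 else 0)
    (hspan : Submodule.span K (Set.range b) = ⊤)
    (hτ : τ.IsHermitian) (hτu : IsUnit τ.det) (hττ : τ * τ = σ) (E : Matrix n n K) :
    ∑ i, ((d : K) * (E * (τ * b i * τ⁻¹) * σ).trace) • star (τ⁻¹ * b i * τ) = E := by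
  have hexp := sum_smul_eq_of_biorthogonal b (fun i => gnsInner d σ (b i)) honb hspan
    (τ * Eᴴ * τ⁻¹)
  calc ∑ i, ((d : K) * (E * (τ * b i * τ⁻¹) * σ).trace) • star (τ⁻¹ * b i * τ)
      = star (τ⁻¹ * (∑ i, gnsInner d σ (b i) (τ * Eᴴ * τ⁻¹) • b i) * τ) := by
        simp only [Finset.mul_sum, Finset.sum_mul, star_sum, mul_smul_comm, smul_mul_assoc,
          star_smul, star_gnsInner_conj_eq hτ hτu hττ]
    _ = E := by
        rw [hexp, star_eq_conjTranspose]
        simp only [conjTranspose_mul, hτ.eq, hτ.inv.eq, conjTranspose_conjTranspose, mul_assoc,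
          mul_nonsing_inv _ hτu, mul_one, one_mul]

end Matrix

theorem stmt17_general (d : ℕ)
    (σ τ : Matrix (Fin d) (Fin d) ℂ)
    (hτ : τ.PosDef) (hττ : τ * τ = σ)
    (A : Matrix (Fin d) (Fin d) ℂ →ₗ[ℂ] Matrix (Fin d) (Fin d) ℂ)
    -- an orthonormal basis of L²(M)
    {ι : Type*} [Fintype ι] [DecidableEq ι] (b : ι → Matrix (Fin d) (Fin d) ℂ)
    (honb : ∀ i j, (d : ℂ) * ((star (b j)) * (b i) * σ).trace = if i = j then 1 else 0)
    (hspan : Submodule.span ℂ (Set.range b) = ⊤)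
    -- P = Σ_x ρ(x) ⊗ λ(A(μ^{1/2}(x)*))
    (P : (Matrix (Fin d) (Fin d) ℂ ⊗[ℂ] Matrix (Fin d) (Fin d) ℂ) →ₗ[ℂ]
      (Matrix (Fin d) (Fin d) ℂ ⊗[ℂ] Matrix (Fin d) (Fin d) ℂ))
    (hP : P = ∑ i, TensorProduct.map
      (LinearMap.mulRight ℂ (τ * (b i) * τ⁻¹))
      (LinearMap.mulLeft ℂ (A (star (τ⁻¹ * (b i) * τ)))))
    -- δ ⊗ id
    (D : (Matrix (Fin d) (Fin d) ℂ ⊗[ℂ] Matrix (Fin d) (Fin d) ℂ) →ₗ[ℂ]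
      Matrix (Fin d) (Fin d) ℂ)
    (hD : ∀ u v, D (u ⊗ₜ[ℂ] v) = ((d : ℂ) * (u * σ).trace) • v)
    (k m : Fin d) :
    D (P ((Matrix.single k k (1 : ℂ)) ⊗ₜ[ℂ] (Matrix.single m m (1 : ℂ))))
      = A (Matrix.single k k (1 : ℂ)) * Matrix.single m m (1 : ℂ) := by
  have hτu : IsUnit τ.det := isUnit_iff_ne_zero.mpr hτ.det_pos.ne'
  calc D (P (Matrix.single k k 1 ⊗ₜ[ℂ] Matrix.single m m 1))
      = A (∑ i, ((d : ℂ) * (Matrix.single k k 1 * (τ * b i * τ⁻¹) * σ).trace) •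
            star (τ⁻¹ * b i * τ)) * Matrix.single m m 1 := by
        simp only [hP, LinearMap.sum_apply, TensorProduct.map_tmul, LinearMap.mulRight_apply,
          LinearMap.mulLeft_apply, map_sum, hD, map_smul, Finset.sum_mul, smul_mul_assoc]
    _ = A (Matrix.single k k 1) * Matrix.single m m 1 := by
        rw [Matrix.sum_trace_mul_conj_smul_star_conj honb hspan hτ.isHermitian hτu hττ]

/-- Let `M = ℂ^{d×d}` with delta-form `δ(x) = d·tr(xσ)`, `σ` diagonal
(`τ = σ^{1/2}`, `μ^{±1/2}(x) = τ^{∓1} x τ^{±1}`), `A : M → M` a linear (adjacency) map,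
`B` an orthonormal basis of `L²(M)`, and
`P := ∑_{x ∈ B} ρ(x) ⊗ λ(A(μ^{1/2}(x)*))` on `L²(M) ⊗ L²(M)`
(where `ρ` is the bimodule right action `ξ ↦ ξ·x = ξ μ^{-1/2}(x)` and `λ` the left
action).  Then `(δ ⊗ id) P ⟦E_{k,k} ⊗ E_{m,m}⟧ = ⟦A(E_{k,k}) E_{m,m}⟧`. -/
theorem stmt17 (d : ℕ) (hd : 0 < d)
    (σ τ : Matrix (Fin d) (Fin d) ℂ) (hσ : σ.PosDef)
    (htr : (σ⁻¹).trace = (d : ℂ))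
    (hdiag : σ.IsDiag)
    (hτ : τ.PosDef) (hττ : τ * τ = σ) (hτdiag : τ.IsDiag)
    (A : Matrix (Fin d) (Fin d) ℂ →ₗ[ℂ] Matrix (Fin d) (Fin d) ℂ)
    -- an orthonormal basis of L²(M)
    {ι : Type*} [Fintype ι] [DecidableEq ι] (b : ι → Matrix (Fin d) (Fin d) ℂ)
    (honb : ∀ i j, (d : ℂ) * ((star (b j)) * (b i) * σ).trace = if i = j then 1 else 0)
    (hspan : Submodule.span ℂ (Set.range b) = ⊤)
    -- P = Σ_x ρ(x) ⊗ λ(A(μ^{1/2}(x)*))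
    (P : (Matrix (Fin d) (Fin d) ℂ ⊗[ℂ] Matrix (Fin d) (Fin d) ℂ) →ₗ[ℂ]
      (Matrix (Fin d) (Fin d) ℂ ⊗[ℂ] Matrix (Fin d) (Fin d) ℂ))
    (hP : P = ∑ i, TensorProduct.map
      (LinearMap.mulRight ℂ (τ * (b i) * τ⁻¹))
      (LinearMap.mulLeft ℂ (A (star (τ⁻¹ * (b i) * τ)))))
    -- δ ⊗ id
    (D : (Matrix (Fin d) (Fin d) ℂ ⊗[ℂ] Matrix (Fin d) (Fin d) ℂ) →ₗ[ℂ]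
      Matrix (Fin d) (Fin d) ℂ)
    (hD : ∀ u v, D (u ⊗ₜ[ℂ] v) = ((d : ℂ) * (u * σ).trace) • v)
    (k m : Fin d) :
    D (P ((Matrix.single k k (1 : ℂ)) ⊗ₜ[ℂ] (Matrix.single m m (1 : ℂ))))
      = A (Matrix.single k k (1 : ℂ)) * Matrix.single m m (1 : ℂ) :=
  stmt17_general d σ τ hτ hττ A b honb hspan P hP D hD k m
end

section
/- Let (M, δ) be a matrix algebra with delta-form. For the GNS space L²(M^{n+1}) with bimodule structure a·⟦x₀⊗…⊗xₙ⟧·b = ⟦a x₀ ⊗ … ⊗ xₙ μ^{-1/2}(b)⟧, the map ⟦x₀ ⊗ … ⊗ xₙ⟧ ↦ ⟦μ^{1/2}(xₙ)* ⊗ … ⊗ μ^{1/2}(x₀)*⟧ is an antiunitary from L²(M^{n+1}) to itself which implements an M-bimodular unitary isomorphism between the conjugate bimodule of L²(M^{n+1}) and L²(M^{n+1}). -/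
/-!
Write `φ x = (τ⁻¹ x τ)*`. Since `τ` is hermitian and invertible, `φ` is a conjugate-linear
anti-automorphism of the matrix algebra with `φ ∘ φ = id`, so `J = ⨂ φ` composed with the
reversal of the tensor factors is an involution, hence bijective. The inner-product and bimodule
identities are additive in each argument, so it suffices to check them on pure tensors, where they
reduce to `tr (τ⁻¹ y τ · φ x · τ²) = tr (x* y σ)` and to `φ (a b) = φ b · φ a` at the two end
factors. Conjugate-linearity is obtained by writing `J` as a linear map after entrywise
conjugation in the product of the standard matrix bases.
-/

open scoped ComplexOrder TensorProduct

namespace Module.Basis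

variable {ι R M : Type*} [CommSemiring R] [StarRing R] [AddCommMonoid M] [Module R M]

noncomputable def conj (b : Basis ι R M) : M →ₗ⋆[R] M where
  toFun u := b.repr.symm (Finsupp.mapRange star (star_zero R) (b.repr u))
  map_add' u v := by
    rw [map_add, Finsupp.mapRange_add (f := star) star_add, map_add]
  map_smul' c u := by
    rw [← map_smul]
    congr 1
    ext i
    simp [starRingEnd_apply]

@[simp]
theorem repr_conj (b : Basis ι R M) (u : M) (i : ι) :
    b.repr (b.conj u) i = star (b.repr u i) := by
  simp [conj]

theorem piTensorProduct_conj_tprod {κ : ι → Type*} {N : ι → Type*} [Fintype ι]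
    [∀ i, AddCommMonoid (N i)] [∀ i, Module R (N i)] (b : ∀ i, Basis (κ i) R (N i))
    (x : ∀ i, N i) :
    (Basis.piTensorProduct b).conj (PiTensorProduct.tprod R x)
      = PiTensorProduct.tprod R (fun i => (b i).conj (x i)) :=
  (Basis.piTensorProduct b).ext_elem fun p => by simp [star_prod]

end Module.Basis

theorem Matrix.stdBasis_conj {m n R : Type*} [Fintype m] [Fintype n] [CommSemiring R]
    [StarRing R] (x : Matrix m n R) : (Matrix.stdBasis R m n).conj x = x.map star :=
  (Matrix.stdBasis R m n).ext_elem fun p => by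
    rw [Module.Basis.repr_conj]
    simp [Matrix.stdBasis]

theorem PiTensorProduct.induction_on_tprod {ι R : Type*} {M : ι → Type*} [Nonempty ι]
    [CommSemiring R] [∀ i, AddCommMonoid (M i)] [∀ i, Module R (M i)]
    {motive : (⨂[R] i, M i) → Prop}
    (u : ⨂[R] i, M i) (tprod : ∀ x, motive (tprod R x))
    (add : ∀ u v, motive u → motive v → motive (u + v)) : motive u := by
  classical
  induction u using PiTensorProduct.induction_on with
  | smul_tprod r x =>
    obtain ⟨i⟩ := ‹Nonempty ι›
    rw [← Function.update_eq_self i x, ← MultilinearMap.map_update_smul]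
    exact tprod _
  | add u v hu hv => exact add u v hu hv

namespace Matrix

variable {m α : Type*} [Fintype m] [DecidableEq m] [CommRing α] [StarRing α]
  {τ : Matrix m m α}

theorem star_inv_mul_mul_mul (hτ : IsUnit τ.det) (a b : Matrix m m α) :
    star (τ⁻¹ * (a * b) * τ) = star (τ⁻¹ * b * τ) * star (τ⁻¹ * a * τ) := by
  simp only [← star_mul, Matrix.mul_assoc, mul_nonsing_inv_cancel_left _ _ hτ]

theorem star_inv_mul_mul_conj_star (hτ : IsUnit τ.det) (x p : Matrix m m α) :
    star (τ⁻¹ * (x * (τ * star p * τ⁻¹)) * τ) = p * star (τ⁻¹ * x * τ) := by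
  rw [star_inv_mul_mul_mul hτ]
  simp only [Matrix.mul_assoc, nonsing_inv_mul_cancel_left _ _ hτ, nonsing_inv_mul _ hτ,
    Matrix.mul_one, star_star]

theorem star_inv_mul_star_mul (hτh : τ.IsHermitian) (q : Matrix m m α) :
    star (τ⁻¹ * star q * τ) = τ * q * τ⁻¹ := by
  simp only [star_mul, Matrix.mul_assoc, star_eq_conjTranspose, conjTranspose_nonsing_inv,
    conjTranspose_conjTranspose, hτh.eq]

theorem star_inv_mul_star_mul_mul (hτh : τ.IsHermitian) (hτ : IsUnit τ.det)
    (q x : Matrix m m α) :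
    star (τ⁻¹ * (star q * x) * τ) = star (τ⁻¹ * x * τ) * (τ * q * τ⁻¹) := by
  rw [star_inv_mul_mul_mul hτ, star_inv_mul_star_mul hτh]

theorem star_inv_mul_star_inv_mul (hτh : τ.IsHermitian) (hτ : IsUnit τ.det)
    (x : Matrix m m α) :
    star (τ⁻¹ * star (τ⁻¹ * x * τ) * τ) = x := by
  rw [star_inv_mul_star_mul hτh]
  simp only [Matrix.mul_assoc, mul_nonsing_inv_cancel_left _ _ hτ, mul_nonsing_inv _ hτ,
    Matrix.mul_one]

theorem trace_inv_mul_mul_star_inv_mul (hτh : τ.IsHermitian) (hτ : IsUnit τ.det)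
    (x y : Matrix m m α) :
    (τ⁻¹ * y * τ * star (τ⁻¹ * x * τ) * (τ * τ)).trace = (star x * y * (τ * τ)).trace := by
  simp only [star_mul, star_eq_conjTranspose, conjTranspose_nonsing_inv, hτh.eq,
    Matrix.mul_assoc, nonsing_inv_mul_cancel_left _ _ hτ]
  rw [trace_mul_comm]
  simp only [← Matrix.mul_assoc, mul_nonsing_inv_cancel_right _ _ hτ]
  rw [trace_mul_comm]
  simp only [Matrix.mul_assoc]

variable {k : ℕ}

noncomputable def revStarConj (τ : Matrix m m α) :
    (⨂[α] _ : Fin k, Matrix m m α) →ₗ⋆[α] (⨂[α] _ : Fin k, Matrix m m α) :=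
  ((PiTensorProduct.map fun _ => LinearMap.mulLeft α (star τ) ∘ₗ
      LinearMap.mulRight α (star τ⁻¹) ∘ₗ (transposeLinearEquiv m m α α).toLinearMap) ∘ₗ
    (PiTensorProduct.reindex α _ Fin.revPerm).toLinearMap).comp
    (Basis.piTensorProduct fun _ => stdBasis α m m).conj

theorem revStarConj_tprod (τ : Matrix m m α) (x : Fin k → Matrix m m α) :
    revStarConj τ (PiTensorProduct.tprod α x)
      = PiTensorProduct.tprod α fun i => star (τ⁻¹ * x i.rev * τ) := by
  simp [revStarConj, Module.Basis.piTensorProduct_conj_tprod, stdBasis_conj, star_mul,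
    Matrix.mul_assoc, transpose_map, star_eq_conjTranspose, conjTranspose]

theorem revStarConj_involutive (hτh : τ.IsHermitian) (hτ : IsUnit τ.det) :
    Function.Involutive (revStarConj (k := k) τ) := by
  have hcomp : (revStarConj τ).comp (revStarConj τ) =
      (LinearMap.id : (⨂[α] _ : Fin k, Matrix m m α) →ₗ[α] _) :=
    PiTensorProduct.ext <| MultilinearMap.ext fun x => by
      simp only [LinearMap.compMultilinearMap_apply, LinearMap.comp_apply, revStarConj_tprod,
        Fin.rev_rev, star_inv_mul_star_inv_mul hτh hτ, LinearMap.id_apply]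
  exact LinearMap.congr_fun hcomp

noncomputable def tensorLeftAct (a : Matrix m m α) :
    (⨂[α] _ : Fin (k + 1), Matrix m m α) →ₗ[α] (⨂[α] _ : Fin (k + 1), Matrix m m α) :=
  PiTensorProduct.map fun i => if i = 0 then LinearMap.mulLeft α a else LinearMap.id

noncomputable def tensorRightAct (b : Matrix m m α) :
    (⨂[α] _ : Fin (k + 1), Matrix m m α) →ₗ[α] (⨂[α] _ : Fin (k + 1), Matrix m m α) :=
  PiTensorProduct.map fun i => if i = Fin.last k then LinearMap.mulRight α b else LinearMap.id

theorem revStarConj_tensorLeftAct_tensorRightAct (hτh : τ.IsHermitian) (hτ : IsUnit τ.det)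
    (p q : Matrix m m α) (u : ⨂[α] _ : Fin (k + 1), Matrix m m α) :
    revStarConj τ (tensorLeftAct (star q) (tensorRightAct (τ * star p * τ⁻¹) u))
      = tensorLeftAct p (tensorRightAct (τ * q * τ⁻¹) (revStarConj τ u)) := by
  induction u using PiTensorProduct.induction_on_tprod with
  | tprod x =>
    simp only [tensorLeftAct, tensorRightAct, PiTensorProduct.map_tprod, revStarConj_tprod]
    congr 1
    funext i
    simp only [Fin.rev_eq_iff, Fin.rev_zero, Fin.rev_last]
    split_ifs <;>
      simp only [LinearMap.mulLeft_apply, LinearMap.mulRight_apply, LinearMap.id_apply,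
        star_inv_mul_star_mul_mul hτh hτ, star_inv_mul_mul_conj_star hτ]
    rw [Matrix.mul_assoc]
  | add u v hu hv => simp only [map_add, hu, hv]

end Matrix

theorem stmt18_general (d n : ℕ)
    (σ τ : Matrix (Fin d) (Fin d) ℂ)
    (hτ : τ.PosDef) (hττ : τ * τ = σ)
    -- the inner product on L²(M^{n+1}), linear in the first variable
    (ipT : (⨂[ℂ] (_ : Fin (n + 1)), Matrix (Fin d) (Fin d) ℂ) →
      (⨂[ℂ] (_ : Fin (n + 1)), Matrix (Fin d) (Fin d) ℂ) → ℂ)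
    (hipT₁ : ∀ u v w, ipT (u + v) w = ipT u w + ipT v w)
    (hipT₂ : ∀ u v w, ipT u (v + w) = ipT u v + ipT u w)
    (hipTt : ∀ x y : Fin (n + 1) → Matrix (Fin d) (Fin d) ℂ,
      ipT (PiTensorProduct.tprod ℂ x) (PiTensorProduct.tprod ℂ y)
        = ∏ i, ((d : ℂ) * ((star (y i)) * (x i) * σ).trace))
    -- the left and right bimodule actions on L²(M^{n+1})
    (Lact Ract : Matrix (Fin d) (Fin d) ℂ →
      (⨂[ℂ] (_ : Fin (n + 1)), Matrix (Fin d) (Fin d) ℂ) →ₗ[ℂ]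
      (⨂[ℂ] (_ : Fin (n + 1)), Matrix (Fin d) (Fin d) ℂ))
    (hLact : ∀ a, Lact a = PiTensorProduct.map (fun i =>
      if i = (0 : Fin (n + 1)) then LinearMap.mulLeft ℂ a else LinearMap.id))
    (hRact : ∀ c, Ract c = PiTensorProduct.map (fun i =>
      if i = Fin.last n then LinearMap.mulRight ℂ (τ * c * τ⁻¹) else LinearMap.id)) :
    ∃ J : (⨂[ℂ] (_ : Fin (n + 1)), Matrix (Fin d) (Fin d) ℂ) →
        (⨂[ℂ] (_ : Fin (n + 1)), Matrix (Fin d) (Fin d) ℂ),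
      (∀ u v, J (u + v) = J u + J v) ∧
      (∀ (c : ℂ) u, J (c • u) = (starRingEnd ℂ c) • J u) ∧
      (∀ x : Fin (n + 1) → Matrix (Fin d) (Fin d) ℂ,
        J (PiTensorProduct.tprod ℂ x)
          = PiTensorProduct.tprod ℂ (fun i => star (τ⁻¹ * x (Fin.rev i) * τ))) ∧
      Function.Bijective J ∧
      (∀ u v, ipT (J u) (J v) = ipT v u) ∧
      (∀ (p q : Matrix (Fin d) (Fin d) ℂ) u,
        J (Lact (star q) (Ract (star p) u)) = Lact p (Ract q (J u))) := by
  have hτh := hτ.isHermitian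
  have hτu : IsUnit τ.det := (Matrix.isUnit_iff_isUnit_det τ).mp hτ.isUnit
  set J := Matrix.revStarConj (k := n + 1) τ
  refine ⟨J, map_add J, J.map_smulₛₗ, Matrix.revStarConj_tprod τ,
    (Matrix.revStarConj_involutive hτh hτu).bijective, fun u v => ?_, fun p q u => ?_⟩
  · induction u using PiTensorProduct.induction_on_tprod with
    | tprod x =>
      induction v using PiTensorProduct.induction_on_tprod with
      | tprod y =>
        rw [Matrix.revStarConj_tprod, Matrix.revStarConj_tprod, hipTt, hipTt]
        refine Fintype.prod_equiv Fin.revPerm _ _ fun i => ?_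
        rw [Fin.revPerm_apply, star_star, ← hττ,
          Matrix.trace_inv_mul_mul_star_inv_mul hτh hτu]
      | add v w hv hw => rw [map_add, hipT₂, hipT₁, hv, hw]
    | add u w hu hw => rw [map_add, hipT₁, hipT₂, hu, hw]
  · rw [hLact, hLact, hRact, hRact]
    exact Matrix.revStarConj_tensorLeftAct_tensorRightAct hτh hτu p q u

/-- Let `M = ℂ^{d×d}` with delta-form `δ(x) = d·tr(xσ)`, `τ = σ^{1/2}`,
`μ^{1/2}(x) = τ⁻¹ x τ`.  On `L²(M^{n+1}) = ⨂_{i : Fin (n+1)} M` with bimodule structure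
`a·⟦x₀⊗…⊗xₙ⟧·c = ⟦a x₀ ⊗ … ⊗ xₙ μ^{-1/2}(c)⟧` and inner product
`⟨⟦x⟧,⟦y⟧⟩ = ∏ᵢ δ(yᵢ* xᵢ)`, the map
`⟦x₀ ⊗ … ⊗ xₙ⟧ ↦ ⟦μ^{1/2}(xₙ)* ⊗ … ⊗ μ^{1/2}(x₀)*⟧` is an antiunitary (additive,
conjugate-linear, bijective, inner-product reversing) which implements an `M`-bimodular
unitary isomorphism between the conjugate bimodule of `L²(M^{n+1})` and `L²(M^{n+1})`. -/
theorem stmt18 (d n : ℕ) (hd : 0 < d)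
    (σ τ : Matrix (Fin d) (Fin d) ℂ) (hσ : σ.PosDef)
    (htr : (σ⁻¹).trace = (d : ℂ))
    (hτ : τ.PosDef) (hττ : τ * τ = σ)
    -- the inner product on L²(M^{n+1}), linear in the first variable
    (ipT : (⨂[ℂ] (_ : Fin (n + 1)), Matrix (Fin d) (Fin d) ℂ) →
      (⨂[ℂ] (_ : Fin (n + 1)), Matrix (Fin d) (Fin d) ℂ) → ℂ)
    (hipT₁ : ∀ u v w, ipT (u + v) w = ipT u w + ipT v w)
    (hipT₂ : ∀ u v w, ipT u (v + w) = ipT u v + ipT u w)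
    (hipTt : ∀ x y : Fin (n + 1) → Matrix (Fin d) (Fin d) ℂ,
      ipT (PiTensorProduct.tprod ℂ x) (PiTensorProduct.tprod ℂ y)
        = ∏ i, ((d : ℂ) * ((star (y i)) * (x i) * σ).trace))
    -- the left and right bimodule actions on L²(M^{n+1})
    (Lact Ract : Matrix (Fin d) (Fin d) ℂ →
      (⨂[ℂ] (_ : Fin (n + 1)), Matrix (Fin d) (Fin d) ℂ) →ₗ[ℂ]
      (⨂[ℂ] (_ : Fin (n + 1)), Matrix (Fin d) (Fin d) ℂ))
    (hLact : ∀ a, Lact a = PiTensorProduct.map (fun i =>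
      if i = (0 : Fin (n + 1)) then LinearMap.mulLeft ℂ a else LinearMap.id))
    (hRact : ∀ c, Ract c = PiTensorProduct.map (fun i =>
      if i = Fin.last n then LinearMap.mulRight ℂ (τ * c * τ⁻¹) else LinearMap.id)) :
    ∃ J : (⨂[ℂ] (_ : Fin (n + 1)), Matrix (Fin d) (Fin d) ℂ) →
        (⨂[ℂ] (_ : Fin (n + 1)), Matrix (Fin d) (Fin d) ℂ),
      (∀ u v, J (u + v) = J u + J v) ∧
      (∀ (c : ℂ) u, J (c • u) = (starRingEnd ℂ c) • J u) ∧
      (∀ x : Fin (n + 1) → Matrix (Fin d) (Fin d) ℂ,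
        J (PiTensorProduct.tprod ℂ x)
          = PiTensorProduct.tprod ℂ (fun i => star (τ⁻¹ * x (Fin.rev i) * τ))) ∧
      Function.Bijective J ∧
      (∀ u v, ipT (J u) (J v) = ipT v u) ∧
      (∀ (p q : Matrix (Fin d) (Fin d) ℂ) u,
        J (Lact (star q) (Ract (star p) u)) = Lact p (Ract q (J u))) :=
  stmt18_general d n σ τ hτ hττ ipT hipT₁ hipT₂ hipTt Lact Ract hLact hRact
end

section
/- Let M be a matrix algebra with delta-form δ and μ = Ad(σ^{-1}). The element υ := δ(δ₀²) d^{-2} σ^{-2} δ₀^{-2} (for δ₀ positive invertible commuting with σ) satisfies υ = Σ_{x ∈ B} x* δ₀² μ^{-1}(x) δ₀^{-2}, where B is any orthonormal basis of M with respect to the inner product ⟨x,y⟩ = δ(y*x). -/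
open scoped ComplexOrder

/-!
Writing `ω = d • σ`, the basis `b` is orthonormal for `⟨x, y⟩ = tr (y* x ω)`, so every matrix
expands as `a = ∑ᵢ tr (bᵢ* a ω) • bᵢ`. Expanding the matrices `E_kp ω⁻¹` (with `E_kp` a matrix
unit) this way shows that `∑ᵢ bᵢ* A bᵢ = tr A • ω⁻¹` for every `A`. The right-hand side of the
theorem is `(∑ᵢ bᵢ* (δ₀² σ) bᵢ) σ⁻¹ δ₀⁻²`.
-/

open Matrix

section OrthonormalBasis

variable {n ι : Type*} [Fintype n] [DecidableEq n] [Fintype ι] [DecidableEq ι]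
  {ω : Matrix n n ℂ} {b : ι → Matrix n n ℂ}

theorem sum_trace_mul_smul_eq_of_orthonormal
    (honb : ∀ i j, (star (b j) * b i * ω).trace = if i = j then 1 else 0)
    (hspan : Submodule.span ℂ (Set.range b) = ⊤) (a : Matrix n n ℂ) :
    ∑ i, (star (b i) * a * ω).trace • b i = a := by
  let expand : Matrix n n ℂ →ₗ[ℂ] Matrix n n ℂ := ∑ i,
    (traceLinearMap n ℂ ℂ ∘ₗ LinearMap.mulRight ℂ ω ∘ₗ LinearMap.mulLeft ℂ (star (b i))).smulRight
      (b i)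
  have h_expand : expand = LinearMap.id :=
    LinearMap.ext_on_range hspan fun j => by simp [expand, honb]
  simpa [expand] using LinearMap.congr_fun h_expand a

theorem sum_star_mul_single_mul_eq_of_orthonormal (hω : IsUnit ω)
    (honb : ∀ i j, (star (b j) * b i * ω).trace = if i = j then 1 else 0)
    (hspan : Submodule.span ℂ (Set.range b) = ⊤) (k l : n) (c : ℂ) :
    ∑ i, star (b i) * single k l c * b i = (single k l c).trace • ω⁻¹ := by
  have hinv : ω⁻¹ * ω = 1 := nonsing_inv_mul ω ((isUnit_iff_isUnit_det ω).mp hω)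
  ext p q
  have h := congrFun₂ (sum_trace_mul_smul_eq_of_orthonormal honb hspan (single k p c * ω⁻¹)) l q
  simp only [Matrix.mul_assoc, hinv, Matrix.mul_one, trace_mul_single] at h
  simp only [Matrix.sum_apply, Matrix.smul_apply, mul_apply, single, of_apply, trace, diag] at h ⊢
  simpa [ite_and, eq_comm] using h

theorem sum_star_mul_mul_eq_of_orthonormal (hω : IsUnit ω)
    (honb : ∀ i j, (star (b j) * b i * ω).trace = if i = j then 1 else 0)
    (hspan : Submodule.span ℂ (Set.range b) = ⊤) (A : Matrix n n ℂ) :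
    ∑ i, star (b i) * A * b i = A.trace • ω⁻¹ := by
  induction A using Matrix.induction_on' with
  | h_zero => simp
  | h_add A B hA hB =>
    simp only [Matrix.mul_add, Matrix.add_mul, Finset.sum_add_distrib, hA, hB, trace_add,
      add_smul]
  | h_std_basis k l c => exact sum_star_mul_single_mul_eq_of_orthonormal hω honb hspan k l c

end OrthonormalBasis

theorem stmt19_general (d : ℕ) (hd : 0 < d)
    (σ : Matrix (Fin d) (Fin d) ℂ) (hσ : σ.PosDef)
    (δ₀ : Matrix (Fin d) (Fin d) ℂ)
    -- an orthonormal basis of M for ⟨x,y⟩ = d·tr(y*xσ)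
    {ι : Type*} [Fintype ι] [DecidableEq ι] (b : ι → Matrix (Fin d) (Fin d) ℂ)
    (honb : ∀ i j, (d : ℂ) * ((star (b j)) * (b i) * σ).trace = if i = j then 1 else 0)
    (hspan : Submodule.span ℂ (Set.range b) = ⊤) :
    (((d : ℂ) * ((δ₀ * δ₀) * σ).trace) * ((d : ℂ) ^ 2)⁻¹) •
        (σ⁻¹ * σ⁻¹ * (δ₀⁻¹ * δ₀⁻¹))
      = ∑ i, (star (b i)) * (δ₀ * δ₀) * (σ * (b i) * σ⁻¹) * (δ₀⁻¹ * δ₀⁻¹) := by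
  have hd_ne : (d : ℂ) ≠ 0 := by exact_mod_cast hd.ne'
  have honb_ω : ∀ i j, (star (b j) * b i * ((d : ℂ) • σ)).trace = if i = j then 1 else 0 := by
    simpa only [Matrix.mul_smul, trace_smul, smul_eq_mul] using honb
  have hω_inv : ((d : ℂ) • σ)⁻¹ = (d : ℂ)⁻¹ • σ⁻¹ :=
    inv_smul' σ (Units.mk0 (d : ℂ) hd_ne) ((isUnit_iff_isUnit_det σ).mp hσ.isUnit)
  have hω_unit : IsUnit ((d : ℂ) • σ) := hσ.isUnit.smul (Units.mk0 (d : ℂ) hd_ne)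
  have hsum := sum_star_mul_mul_eq_of_orthonormal hω_unit honb_ω hspan (δ₀ * δ₀ * σ)
  calc _ = ((d : ℂ)⁻¹ * (δ₀ * δ₀ * σ).trace) • (σ⁻¹ * (σ⁻¹ * (δ₀⁻¹ * δ₀⁻¹))) := by
        rw [Matrix.mul_assoc σ⁻¹ σ⁻¹]
        congr 1
        field_simp
    _ = (∑ i, star (b i) * (δ₀ * δ₀ * σ) * b i) * (σ⁻¹ * (δ₀⁻¹ * δ₀⁻¹)) := by
        rw [hsum, hω_inv, smul_smul, Matrix.smul_mul, mul_comm]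
    _ = _ := by
        simp only [Finset.sum_mul, Matrix.mul_assoc]

/-- Let `M = ℂ^{d×d}` with delta-form `δ(x) = d·tr(xσ)` and
`μ⁻¹(x) = σ x σ⁻¹`.  For `δ₀` positive invertible commuting with `σ`, the element
`υ := δ(δ₀²) d⁻² σ⁻² δ₀⁻²` satisfies
`υ = ∑_{x ∈ B} x* δ₀² μ⁻¹(x) δ₀⁻²` for any orthonormal basis `B` of `M` with respect to
`⟨x,y⟩ = δ(y*x)`. -/
theorem stmt19 (d : ℕ) (hd : 0 < d)
    (σ : Matrix (Fin d) (Fin d) ℂ) (hσ : σ.PosDef)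
    (htr : (σ⁻¹).trace = (d : ℂ))
    (δ₀ : Matrix (Fin d) (Fin d) ℂ) (hδ₀ : δ₀.PosDef)
    (hδ₀σ : δ₀ * σ = σ * δ₀)
    -- an orthonormal basis of M for ⟨x,y⟩ = d·tr(y*xσ)
    {ι : Type*} [Fintype ι] [DecidableEq ι] (b : ι → Matrix (Fin d) (Fin d) ℂ)
    (honb : ∀ i j, (d : ℂ) * ((star (b j)) * (b i) * σ).trace = if i = j then 1 else 0)
    (hspan : Submodule.span ℂ (Set.range b) = ⊤) :
    (((d : ℂ) * ((δ₀ * δ₀) * σ).trace) * ((d : ℂ) ^ 2)⁻¹) •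
        (σ⁻¹ * σ⁻¹ * (δ₀⁻¹ * δ₀⁻¹))
      = ∑ i, (star (b i)) * (δ₀ * δ₀) * (σ * (b i) * σ⁻¹) * (δ₀⁻¹ * δ₀⁻¹) :=
  stmt19_general d hd σ hσ δ₀ b honb hspan
end
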